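/- Two-range intersection bound for the hard construction: let K = 2^r with r ≥ 1, and let R1, R2 be boxes [K^{-j_1} × K^{j_1} 2^{i_1 r + j_1} V × 2^{-(i_1 r + j_1)}] and [K^{-j_2} × K^{j_2} 2^{i_2 r + j_2} V × 2^{-(i_2 r + j_2)}] with (i_1, j_1) ≠ (i_2, j_2), integers i_1, i_2 ≥ 0, 0 ≤ j_1, j_2 ≤ r−1, and all side lengths at most 1. Then vol(R1 ∩ R2) ≤ V/2 · max(2^{-|(i_1 r + j_1) − (i_2 r + j_2)|}, K^{-|j_1 − j_2|}) ≤ V/2. -/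
import Mathlib

open MeasureTheory

lemma box3_inter_vol_le' (p₁ p₂ s₁ s₂ : Fin 3 → ℝ) :
    volume ((Set.pi Set.univ (fun i => Set.Icc (p₁ i) (p₁ i + s₁ i))) ∩
      (Set.pi Set.univ (fun i => Set.Icc (p₂ i) (p₂ i + s₂ i)))) ≤
      ENNReal.ofReal (min (s₁ 0) (s₂ 0)) * ENNReal.ofReal (min (s₁ 1) (s₂ 1)) *
        ENNReal.ofReal (min (s₁ 2) (s₂ 2)) := by
  rw [← Set.pi_inter_distrib, volume_pi_pi, Fin.prod_univ_three]
  have h : ∀ i, volume (Set.Icc (p₁ i) (p₁ i + s₁ i) ∩ Set.Icc (p₂ i) (p₂ i + s₂ i)) ≤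
      ENNReal.ofReal (min (s₁ i) (s₂ i)) := by
    intro i
    have h1 : volume (Set.Icc (p₁ i) (p₁ i + s₁ i) ∩ Set.Icc (p₂ i) (p₂ i + s₂ i)) ≤
        ENNReal.ofReal (s₁ i) := by
      refine le_trans (measure_mono Set.inter_subset_left) ?_
      rw [Real.volume_Icc]; simp
    have h2 : volume (Set.Icc (p₁ i) (p₁ i + s₁ i) ∩ Set.Icc (p₂ i) (p₂ i + s₂ i)) ≤
        ENNReal.ofReal (s₂ i) := by
      refine le_trans (measure_mono Set.inter_subset_right) ?_
      rw [Real.volume_Icc]; simp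
    rcases le_total (s₁ i) (s₂ i) with h | h
    · rw [min_eq_left h]; exact h1
    · rw [min_eq_right h]; exact h2
  exact mul_le_mul' (mul_le_mul' (h 0) (h 1)) (h 2)

lemma key_int' (r a b m : ℤ) (hr : 1 ≤ r) (ha : |a| ≤ r - 1) (hbm : b = m * r + a)
    (hb0 : b ≠ 0) :
    min |b| |r * a| + 1 ≤ max (max |b| (|r * a|)) |r * a + b| := by
  have hb1 : 1 ≤ |b| := Int.one_le_abs hb0
  rcases eq_or_ne a 0 with ha0 | ha0
  · subst ha0; simp; omega
  · have ha1 : 1 ≤ |a| := Int.one_le_abs ha0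
    have hra : |r * a| = r * |a| := by rw [abs_mul, abs_of_nonneg (by omega : (0:ℤ) ≤ r)]
    have hra1 : r ≤ |r * a| := by nlinarith
    rcases lt_trichotomy |b| |r * a| with h | h | h
    · omega
    · rcases abs_eq_abs.mp h with hbeq | hbeq
      · have : |r * a + b| = 2 * |b| := by
          rw [← hbeq, show b + b = 2 * b by ring, abs_mul]; simp
        omega
      · exfalso
        have hdvd : r ∣ a := ⟨-(m + a), by linarith [hbeq, hbm]⟩
        have : r ≤ |a| := Int.le_of_dvd (abs_pos.mpr ha0) ((dvd_abs r a).mpr hdvd)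
        omega
    · omega

lemma six_bounds' (V : ℝ) (hV : 0 < V) (t u₁ u₂ d₁ d₂ b : ℤ)
    (ht : t = u₁ - u₂) (hb : b = d₁ - d₂) :
    min ((2:ℝ) ^ (-u₁)) (2 ^ (-u₂)) * min (2 ^ (u₁ + d₁) * V) (2 ^ (u₂ + d₂) * V) *
      min ((2:ℝ) ^ (-d₁)) (2 ^ (-d₂)) ≤
    V * 2 ^ (-(max (max |b| |t|) |t + b|)) := by
  have pos : ∀ w : ℤ, (0:ℝ) < 2 ^ w := fun w => zpow_pos two_pos w
  have h2 : (2:ℝ) ≠ 0 := two_ne_zero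
  set P := min ((2:ℝ) ^ (-u₁)) (2 ^ (-u₂)) * min (2 ^ (u₁ + d₁) * V) (2 ^ (u₂ + d₂) * V) *
      min ((2:ℝ) ^ (-d₁)) (2 ^ (-d₂)) with hP
  have m1pos : 0 < min ((2:ℝ) ^ (u₁ + d₁) * V) (2 ^ (u₂ + d₂) * V) :=
    lt_min (mul_pos (pos _) hV) (mul_pos (pos _) hV)
  have m2pos : 0 < min ((2:ℝ) ^ (-d₁)) (2 ^ (-d₂)) := lt_min (pos _) (pos _)
  have S : ∀ x y z : ℤ, min ((2:ℝ) ^ (-u₁)) (2 ^ (-u₂)) ≤ 2 ^ x →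
      min ((2:ℝ) ^ (u₁ + d₁) * V) (2 ^ (u₂ + d₂) * V) ≤ 2 ^ y * V →
      min ((2:ℝ) ^ (-d₁)) (2 ^ (-d₂)) ≤ 2 ^ z →
      P ≤ V * 2 ^ (x + y + z) := by
    intro x y z hx hy hz
    have : P ≤ 2 ^ x * (2 ^ y * V) * 2 ^ z := by
      apply mul_le_mul (mul_le_mul hx hy m1pos.le (pos x).le) hz m2pos.le
      positivity
    calc P ≤ 2 ^ x * (2 ^ y * V) * 2 ^ z := this
      _ = V * 2 ^ (x + y + z) := by
          rw [zpow_add₀ h2, zpow_add₀ h2]; ring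
  have Hb : P ≤ V * 2 ^ (-|b|) := by
    rcases abs_cases b with ⟨h1, _⟩ | ⟨h1, _⟩
    · have := S (-u₂) (u₂ + d₂) (-d₁) (min_le_right _ _) (min_le_right _ _) (min_le_left _ _)
      rw [show -u₂ + (u₂ + d₂) + -d₁ = -(d₁ - d₂) by ring, ← hb, ← h1] at this; exact this
    · have := S (-u₁) (u₁ + d₁) (-d₂) (min_le_left _ _) (min_le_left _ _) (min_le_right _ _)
      rw [show -u₁ + (u₁ + d₁) + -d₂ = d₁ - d₂ by ring, ← hb] at this
      rw [h1, neg_neg]; exact this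
  have Ht : P ≤ V * 2 ^ (-|t|) := by
    rcases abs_cases t with ⟨h1, _⟩ | ⟨h1, _⟩
    · have := S (-u₁) (u₂ + d₂) (-d₂) (min_le_left _ _) (min_le_right _ _) (min_le_right _ _)
      rw [show -u₁ + (u₂ + d₂) + -d₂ = -(u₁ - u₂) by ring, ← ht, ← h1] at this; exact this
    · have := S (-u₂) (u₁ + d₁) (-d₁) (min_le_right _ _) (min_le_left _ _) (min_le_left _ _)
      rw [show -u₂ + (u₁ + d₁) + -d₁ = u₁ - u₂ by ring, ← ht] at this
      rw [h1, neg_neg]; exact this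
  have Htb : P ≤ V * 2 ^ (-|t + b|) := by
    rcases abs_cases (t + b) with ⟨h1, _⟩ | ⟨h1, _⟩
    · have := S (-u₁) (u₂ + d₂) (-d₁) (min_le_left _ _) (min_le_right _ _) (min_le_left _ _)
      rw [show -u₁ + (u₂ + d₂) + -d₁ = -((u₁ - u₂) + (d₁ - d₂)) by ring, ← ht, ← hb, ← h1]
        at this
      exact this
    · have := S (-u₂) (u₁ + d₁) (-d₂) (min_le_right _ _) (min_le_left _ _) (min_le_right _ _)
      rw [show -u₂ + (u₁ + d₁) + -d₂ = (u₁ - u₂) + (d₁ - d₂) by ring, ← ht, ← hb] at this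
      rw [h1, neg_neg]; exact this
  rcases max_cases (max |b| |t|) |t + b| with ⟨h1, _⟩ | ⟨h1, _⟩
  · rw [h1]
    rcases max_cases |b| |t| with ⟨h2', _⟩ | ⟨h2', _⟩
    · rw [h2']; exact Hb
    · rw [h2']; exact Ht
  · rw [h1]; exact Htb

/-- An axis-aligned box in ℝ³ given by its lower corner and side lengths. -/
def box3 (p s : Fin 3 → ℝ) : Set (Fin 3 → ℝ) :=
  Set.pi Set.univ (fun i => Set.Icc (p i) (p i + s i))

theorem stmt_15 (r : ℕ) (hr : 1 ≤ r) (V : ℝ) (hV : 0 < V)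
    (i₁ i₂ j₁ j₂ : ℕ) (hj₁ : j₁ ≤ r - 1) (hj₂ : j₂ ≤ r - 1)
    (hne : (i₁, j₁) ≠ (i₂, j₂)) (p₁ p₂ : Fin 3 → ℝ)
    (K : ℝ) (hK : K = 2 ^ r)
    (s₁ s₂ : Fin 3 → ℝ)
    (hs₁ : s₁ = ![K ^ (-(j₁ : ℤ)), K ^ (j₁ : ℤ) * 2 ^ ((i₁ * r + j₁ : ℕ) : ℤ) * V,
      (2 : ℝ) ^ (-(i₁ * r + j₁ : ℤ))])
    (hs₂ : s₂ = ![K ^ (-(j₂ : ℤ)), K ^ (j₂ : ℤ) * 2 ^ ((i₂ * r + j₂ : ℕ) : ℤ) * V,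
      (2 : ℝ) ^ (-(i₂ * r + j₂ : ℤ))])
    (hside₁ : ∀ c, s₁ c ≤ 1) (hside₂ : ∀ c, s₂ c ≤ 1) :
    volume (box3 p₁ s₁ ∩ box3 p₂ s₂) ≤
      ENNReal.ofReal (V / 2 *
        max ((2 : ℝ) ^ (-( |(i₁ * r + j₁ : ℤ) - (i₂ * r + j₂ : ℤ)| )))
          (K ^ (-( |(j₁ : ℤ) - (j₂ : ℤ)| )))) ∧
    volume (box3 p₁ s₁ ∩ box3 p₂ s₂) ≤ ENNReal.ofReal (V / 2) := by
  have h2 : (2:ℝ) ≠ 0 := two_ne_zero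
  have hK0 : (0:ℝ) < K := by rw [hK]; positivity
  have hKz : ∀ z : ℤ, K ^ z = (2:ℝ) ^ ((r:ℤ) * z) := by
    intro z; rw [hK, ← zpow_natCast (2:ℝ) r, ← zpow_mul]
  set d₁ : ℤ := (i₁:ℤ) * (r:ℤ) + (j₁:ℤ) with hd₁
  set d₂ : ℤ := (i₂:ℤ) * (r:ℤ) + (j₂:ℤ) with hd₂
  set a : ℤ := (j₁:ℤ) - (j₂:ℤ) with ha_def
  set b : ℤ := d₁ - d₂ with hb_def
  set u₁ : ℤ := (r:ℤ) * (j₁:ℤ) with hu₁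
  set u₂ : ℤ := (r:ℤ) * (j₂:ℤ) with hu₂
  -- side formulas
  have hc₁ : ((i₁ * r + j₁ : ℕ) : ℤ) = d₁ := by rw [hd₁]; push_cast; ring
  have hc₂ : ((i₂ * r + j₂ : ℕ) : ℤ) = d₂ := by rw [hd₂]; push_cast; ring
  have e10 : s₁ 0 = (2:ℝ) ^ (-u₁) := by
    rw [hs₁]; show K ^ (-(j₁:ℤ)) = _
    rw [hKz, hu₁]; congr 1; ring
  have e20 : s₂ 0 = (2:ℝ) ^ (-u₂) := by
    rw [hs₂]; show K ^ (-(j₂:ℤ)) = _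
    rw [hKz, hu₂]; congr 1; ring
  have e11 : s₁ 1 = (2:ℝ) ^ (u₁ + d₁) * V := by
    rw [hs₁]; show K ^ ((j₁:ℤ)) * 2 ^ ((i₁ * r + j₁ : ℕ) : ℤ) * V = _
    rw [hKz, hc₁, ← zpow_add₀ h2, hu₁]
  have e21 : s₂ 1 = (2:ℝ) ^ (u₂ + d₂) * V := by
    rw [hs₂]; show K ^ ((j₂:ℤ)) * 2 ^ ((i₂ * r + j₂ : ℕ) : ℤ) * V = _
    rw [hKz, hc₂, ← zpow_add₀ h2, hu₂]
  have e12 : s₁ 2 = (2:ℝ) ^ (-d₁) := by rw [hs₁]; rfl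
  have e22 : s₂ 2 = (2:ℝ) ^ (-d₂) := by rw [hs₂]; rfl
  -- volume bound
  have h0 : (0:ℝ) ≤ min (s₁ 0) (s₂ 0) := by
    rw [e10, e20]; exact le_min (zpow_pos two_pos _).le (zpow_pos two_pos _).le
  have h1' : (0:ℝ) ≤ min (s₁ 1) (s₂ 1) := by
    rw [e11, e21]
    exact le_min (mul_pos (zpow_pos two_pos _) hV).le (mul_pos (zpow_pos two_pos _) hV).le
  have hvol : volume (box3 p₁ s₁ ∩ box3 p₂ s₂) ≤
      ENNReal.ofReal (min (s₁ 0) (s₂ 0) * min (s₁ 1) (s₂ 1) * min (s₁ 2) (s₂ 2)) := by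
    rw [ENNReal.ofReal_mul (mul_nonneg h0 h1'), ENNReal.ofReal_mul h0]
    exact box3_inter_vol_le' p₁ p₂ s₁ s₂
  -- integer facts
  have hrz : 1 ≤ (r:ℤ) := by exact_mod_cast hr
  have ha : |a| ≤ (r:ℤ) - 1 := by
    rw [ha_def, abs_le]; constructor <;> omega
  have hbm : b = ((i₁:ℤ) - (i₂:ℤ)) * (r:ℤ) + a := by
    rw [hb_def, ha_def, hd₁, hd₂]; ring
  have hb0 : b ≠ 0 := by
    intro hb0
    rcases eq_or_ne ((i₁:ℤ) - (i₂:ℤ)) 0 with hm | hm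
    · rw [hm, zero_mul, zero_add] at hbm
      have hi : i₁ = i₂ := by omega
      have hj : j₁ = j₂ := by rw [hb0] at hbm; rw [ha_def] at hbm; omega
      exact hne (by rw [hi, hj])
    · have h1 : a = -(((i₁:ℤ) - (i₂:ℤ)) * (r:ℤ)) := by rw [hb0] at hbm; linarith
      have h2' : (r:ℤ) ≤ |a| := by
        rw [h1, abs_neg, abs_mul, abs_of_nonneg (by omega : (0:ℤ) ≤ (r:ℤ))]
        nlinarith [Int.one_le_abs hm]
      omega
  have hM := key_int' (r:ℤ) a b ((i₁:ℤ) - (i₂:ℤ)) hrz ha hbm hb0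
  have hta : ((r:ℤ) * a) = u₁ - u₂ := by rw [ha_def, hu₁, hu₂]; ring
  have habs : |(r:ℤ) * a| = (r:ℤ) * |a| := by
    rw [abs_mul, abs_of_nonneg (by omega : (0:ℤ) ≤ (r:ℤ))]
  -- real inequality
  have hreal : min (s₁ 0) (s₂ 0) * min (s₁ 1) (s₂ 1) * min (s₁ 2) (s₂ 2) ≤
      V / 2 * max ((2:ℝ) ^ (-|b|)) (K ^ (-|a|)) := by
    rw [e10, e20, e11, e21, e12, e22]
    have six := six_bounds' V hV ((r:ℤ) * a) u₁ u₂ d₁ d₂ b hta hb_def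
    refine six.trans ?_
    have step1 : V * (2:ℝ) ^ (-(max (max |b| |(r:ℤ) * a|) |(r:ℤ) * a + b|)) ≤
        V * 2 ^ (-(min |b| |(r:ℤ) * a| + 1)) := by
      apply mul_le_mul_of_nonneg_left _ hV.le
      apply zpow_le_zpow_right₀ one_le_two
      omega
    refine step1.trans ?_
    have step2 : V * (2:ℝ) ^ (-(min |b| |(r:ℤ) * a| + 1)) =
        V / 2 * 2 ^ (-(min |b| |(r:ℤ) * a|)) := by
      rw [show -(min |b| |(r:ℤ) * a| + 1) = -(min |b| |(r:ℤ) * a|) + (-1) by ring,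
        zpow_add₀ h2, zpow_neg_one]
      ring
    rw [step2]
    apply mul_le_mul_of_nonneg_left _ (by linarith : (0:ℝ) ≤ V / 2)
    have hKa : K ^ (-|a|) = (2:ℝ) ^ (-|(r:ℤ) * a|) := by
      rw [hKz]; congr 1; rw [habs]; ring
    rw [hKa]
    rcases le_total |b| |(r:ℤ) * a| with hle | hle
    · rw [min_eq_left hle, max_eq_left (zpow_le_zpow_right₀ one_le_two (by omega))]
    · rw [min_eq_right hle, max_eq_right (zpow_le_zpow_right₀ one_le_two (by omega))]
  have first : volume (box3 p₁ s₁ ∩ box3 p₂ s₂) ≤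
      ENNReal.ofReal (V / 2 * max ((2:ℝ) ^ (-|b|)) (K ^ (-|a|))) :=
    hvol.trans (ENNReal.ofReal_le_ofReal hreal)
  refine ⟨first, first.trans (ENNReal.ofReal_le_ofReal ?_)⟩
  have hb1 : (2:ℝ) ^ (-|b|) ≤ 1 := by
    calc (2:ℝ) ^ (-|b|) ≤ 2 ^ (0:ℤ) := zpow_le_zpow_right₀ one_le_two (neg_nonpos.mpr (abs_nonneg b))
      _ = 1 := zpow_zero 2
  have ha1 : K ^ (-|a|) ≤ 1 := by
    rw [hKz]
    calc (2:ℝ) ^ ((r:ℤ) * -|a|) ≤ 2 ^ (0:ℤ) := by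
          apply zpow_le_zpow_right₀ one_le_two
          have : (0:ℤ) ≤ |a| := abs_nonneg a
          nlinarith
      _ = 1 := zpow_zero 2
  exact mul_le_of_le_one_right (by linarith : (0:ℝ) ≤ V / 2) (max_le hb1 ha1)
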